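/- Let a, b, c, d : ℝ with a < 0 and d < 0, and for τ > 0 let J_τ = !![a, b; τ*c, τ*d]. If there exists τ₀ > 0 such that J_{τ₀} is Hurwitz, then J_τ is Hurwitz for every τ > 0. (A stable Nash equilibrium of scalar gradient play remains stable under any change of the learning-rate ratio.) -/
import Mathlib

lemma mem_spec_fin_two (a b c d : ℝ) (μ : ℂ) :
    μ ∈ spectrum ℂ ((!![a, b; c, d]).map Complex.ofReal) ↔
      (μ - a) * (μ - d) - b * c = 0 := by
  rw [spectrum.mem_iff, Matrix.isUnit_iff_isUnit_det, isUnit_iff_ne_zero, not_not,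
    Matrix.det_fin_two]
  simp [Algebra.algebraMap_eq_smul_one, Matrix.smul_apply, Matrix.sub_apply,
    Matrix.one_apply, Matrix.map_apply]

/-- Roots of `μ² - tμ + p = 0` with `t < 0`, `p > 0` have negative real part. -/
lemma root_neg_re (t p : ℝ) (ht : t < 0) (hp : 0 < p) (μ : ℂ)
    (h : μ * μ - t * μ + p = 0) : μ.re < 0 := by
  have hre := congrArg Complex.re h
  have him := congrArg Complex.im h
  simp [Complex.add_re, Complex.add_im, Complex.sub_re, Complex.sub_im,
    Complex.mul_re, Complex.mul_im, Complex.ofReal_re, Complex.ofReal_im] at hre him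
  by_contra hx
  push_neg at hx
  rcases eq_or_ne μ.im 0 with h0 | h0
  · nlinarith [sq_nonneg μ.re]
  · have h2 : μ.im * (2 * μ.re - t) = 0 := by linear_combination him
    rcases mul_eq_zero.mp h2 with h3 | h3
    · exact h0 h3
    · linarith

/-- A real matrix is Hurwitz (stable) if every eigenvalue of the matrix,
viewed as a matrix over `ℂ`, has negative real part. -/
def IsHurwitz {n : ℕ} (J : Matrix (Fin n) (Fin n) ℝ) : Prop :=
  ∀ μ ∈ spectrum ℂ (J.map Complex.ofReal), μ.re < 0

theorem stable_nash_robust_to_learning_rates (a b c d : ℝ)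
    (ha : a < 0) (hd : d < 0)
    (hex : ∃ τ₀ : ℝ, τ₀ > 0 ∧ IsHurwitz !![a, b; τ₀ * c, τ₀ * d]) :
    ∀ τ : ℝ, τ > 0 → IsHurwitz !![a, b; τ * c, τ * d] := by
  simp only [IsHurwitz] at hex ⊢
  obtain ⟨τ₀, hτ₀, h₀⟩ := hex
  -- Step 1: deduce a*d - b*c > 0 from stability at τ₀
  have hDet : 0 < a * d - b * c := by
    by_contra hle
    push_neg at hle
    set t : ℝ := a + τ₀ * d with htdef
    set p : ℝ := τ₀ * (a * d - b * c) with hpdef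
    have ht : t < 0 := by nlinarith
    have hp : p ≤ 0 := by nlinarith
    set r : ℝ := Real.sqrt (t ^ 2 - 4 * p) with hrdef
    have hr2 : r ^ 2 = t ^ 2 - 4 * p := Real.sq_sqrt (by nlinarith)
    have hrt : -t ≤ r := by
      have h1 : Real.sqrt (t ^ 2) ≤ r := Real.sqrt_le_sqrt (by nlinarith)
      rw [Real.sqrt_sq_eq_abs, abs_of_neg ht] at h1
      linarith
    set x : ℝ := (t + r) / 2 with hxdef
    have hx0 : 0 ≤ x := by
      have : 0 ≤ t + r := by linarith
      positivity
    have hroot : x ^ 2 - t * x + p = 0 := by nlinarith [hr2]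
    have hmem : (x : ℂ) ∈ spectrum ℂ ((!![a, b; τ₀ * c, τ₀ * d]).map Complex.ofReal) := by
      rw [mem_spec_fin_two]
      have : ((x : ℂ) - a) * ((x : ℂ) - (τ₀ * d : ℝ)) - (b : ℂ) * ((τ₀ * c : ℝ) : ℂ)
          = ((x ^ 2 - t * x + p : ℝ) : ℂ) := by
        push_cast [htdef, hpdef]
        ring
      rw [this, hroot]
      simp
    have := h₀ _ hmem
    simp [Complex.ofReal_re] at this
    linarith
  -- Step 2: every τ > 0 works
  intro τ hτ μ hμ
  rw [mem_spec_fin_two] at hμ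
  apply root_neg_re (a + τ * d) (τ * (a * d - b * c)) (by nlinarith) (by nlinarith)
  push_cast at hμ ⊢
  linear_combination hμ
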